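/- Let A : ℝ → ℝ be differentiable with A'(z) ≥ η for all z, where η > 0, and let ε > 0. Define ψ_ε(a,b) = ∫_b^a sign_ε(A(z) − A(b)) dz. Then for all a, b ∈ ℝ, |ψ_ε(a,b) − |a − b|| ≤ Cε/η, where C is an absolute constant (independent of a, b, ε, η, A). -/

import Mathlib

noncomputable def sgn (σ : ℝ) : ℝ := if σ < 0 then -1 else if σ = 0 then 0 else 1

noncomputable def signEps (ε σ : ℝ) : ℝ :=
  if ε < |σ| then sgn σ else Real.sin (Real.pi * σ / (2 * ε))

/-- `ψ_ε(a,b) = ∫_b^a sign_ε(A(z) − A(b)) dz`. -/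
noncomputable def psiEps (A : ℝ → ℝ) (ε a b : ℝ) : ℝ :=
  ∫ z in b..a, signEps ε (A z - A b)

/-!
Since `A` is increasing, the integrand `sign_ε(A z - A b)` agrees with `sgn (z - b)`, whose
integral from `b` to `a` is `|a - b|`, as soon as `|A z - A b| ≥ ε`; since `A' ≥ η` this holds
whenever `|z - b| ≥ ε / η`. The two integrands differ by at most `2`, and the part of the segment
from `b` to `a` that lies within `ε / η` of `b` has length at most `ε / η`, so `C = 2` works.
-/

open MeasureTheory Set intervalIntegral
open scoped Interval

lemma sgn_eq_sign (σ : ℝ) : sgn σ = SignType.sign σ := by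
  rcases lt_trichotomy σ 0 with h | rfl | h
  · simp [sgn, h]
  · simp [sgn]
  · simp [sgn, h, h.not_gt, h.ne']

lemma abs_sgn_le_one (σ : ℝ) : |sgn σ| ≤ 1 := by
  unfold sgn; split_ifs <;> norm_num

lemma measurable_sgn : Measurable sgn :=
  Measurable.ite measurableSet_Iio measurable_const
    (Measurable.ite (measurableSet_singleton 0) measurable_const measurable_const)

lemma sgn_sub_eq_of_strictMono {A : ℝ → ℝ} (hA : StrictMono A) (z b : ℝ) :
    sgn (A z - A b) = sgn (z - b) := by
  rcases lt_trichotomy z b with h | rfl | h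
  · simp [sgn, h, hA h]
  · simp
  · simp [sgn, h.not_gt, (hA h).not_gt, sub_ne_zero.2 h.ne', sub_ne_zero.2 (hA h).ne']

lemma abs_signEps_le_one (ε σ : ℝ) : |signEps ε σ| ≤ 1 := by
  unfold signEps
  split_ifs
  · exact abs_sgn_le_one σ
  · exact Real.abs_sin_le_one _

lemma measurable_signEps (ε : ℝ) : Measurable (signEps ε) :=
  Measurable.ite (measurableSet_lt measurable_const measurable_id.abs) measurable_sgn
    (by fun_prop)

lemma signEps_of_le_abs {ε σ : ℝ} (hε : 0 < ε) (h : ε ≤ |σ|) : signEps ε σ = sgn σ := by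
  rcases h.lt_or_eq with h | h
  · rw [signEps, if_pos h]
  -- on the boundary `|σ| = ε` the sine branch is `sin (± π / 2) = ± 1`
  rw [signEps, if_neg h.not_lt]
  have hpi : Real.pi * ε / (2 * ε) = Real.pi / 2 := by field_simp
  rcases eq_or_eq_neg_of_abs_eq h.symm with rfl | rfl
  · simp [hpi, sgn, hε.not_gt, hε.ne']
  · simp [mul_neg, neg_div, hpi, sgn, hε]

lemma mul_abs_sub_le_abs_sub_of_le_deriv {A : ℝ → ℝ} {η : ℝ} (hA : Differentiable ℝ A)
    (hA' : ∀ z, η ≤ deriv A z) (z b : ℝ) : η * |z - b| ≤ |A z - A b| := by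
  rcases le_total b z with h | h
  · rw [abs_of_nonneg (sub_nonneg.2 h)]
    exact (mul_sub_le_image_sub_of_le_deriv hA hA' h).trans (le_abs_self _)
  · rw [abs_sub_comm z, abs_sub_comm (A z), abs_of_nonneg (sub_nonneg.2 h)]
    exact (mul_sub_le_image_sub_of_le_deriv hA hA' h).trans (le_abs_self _)

lemma intervalIntegrable_of_abs_le {f : ℝ → ℝ} (hf : Measurable f) {M : ℝ}
    (hM : ∀ z, |f z| ≤ M) (a b : ℝ) : IntervalIntegrable f volume a b :=
  intervalIntegrable_iff.2 <| Measure.integrableOn_of_bounded measure_Ioc_lt_top.ne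
    hf.aestronglyMeasurable (M := M) (Filter.Eventually.of_forall hM)

lemma integral_sgn_sub (a b : ℝ) : ∫ z in b..a, sgn (z - b) = |a - b| := by
  have hderiv : ∀ x ∈ Ioo (min b a) (max b a),
      HasDerivWithinAt (fun z => |z - b|) (sgn (x - b)) (Ioi x) x := by
    intro x hx
    have hxb : x - b ≠ 0 := by
      rw [sub_ne_zero]; rintro rfl; simp at hx; linarith [hx.1, hx.2]
    rw [sgn_eq_sign, ← mul_one (SignType.sign (x - b) : ℝ)]
    exact ((hasDerivAt_abs hxb).comp x ((hasDerivAt_id x).sub_const b)).hasDerivWithinAt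
  rw [integral_eq_sub_of_hasDeriv_right (by fun_prop) hderiv <|
    intervalIntegrable_of_abs_le (measurable_sgn.comp (by fun_prop))
      (fun _ => abs_sgn_le_one _) b a]
  simp

lemma exists_mem_uIcc_abs_sub_le {r : ℝ} (hr : 0 ≤ r) (a b : ℝ) :
    ∃ c ∈ uIcc b a, |c - b| ≤ r ∧ ∀ z ∈ Ι c a, r ≤ |z - b| := by
  -- `c` is `a` clamped to `[b - r, b + r]`
  rcases lt_or_ge (b + r) a with h | h
  · refine ⟨b + r, mem_uIcc.2 (Or.inl ⟨by linarith, h.le⟩), by simp [abs_of_nonneg hr], ?_⟩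
    intro z hz
    rw [uIoc_of_le h.le] at hz
    exact (by linarith [hz.1] : r ≤ z - b).trans (le_abs_self _)
  rcases lt_or_ge a (b - r) with h' | h'
  · refine ⟨b - r, mem_uIcc.2 (Or.inr ⟨h'.le, by linarith⟩), by simp [abs_of_nonneg hr], ?_⟩
    intro z hz
    rw [uIoc_of_ge h'.le] at hz
    exact (by linarith [hz.2] : r ≤ -(z - b)).trans (neg_le_abs _)
  · exact ⟨a, right_mem_uIcc, abs_sub_le_iff.2 ⟨by linarith, by linarith⟩, by simp⟩

lemma abs_intervalIntegral_le_of_eq_zero {f : ℝ → ℝ} {M r a b : ℝ} (hr : 0 ≤ r)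
    (hfi : IntervalIntegrable f volume b a) (hM : ∀ z, |f z| ≤ M)
    (h0 : ∀ z, r ≤ |z - b| → f z = 0) : |∫ z in b..a, f z| ≤ M * r := by
  obtain ⟨c, hc, hcb, hca⟩ := exists_mem_uIcc_abs_sub_le hr a b
  have htail : ∫ z in c..a, f z = 0 :=
    integral_zero_ae (Filter.Eventually.of_forall fun z hz => h0 z (hca z hz))
  rw [← integral_add_adjacent_intervals (hfi.mono_set (uIcc_subset_uIcc_left hc))
    (hfi.mono_set (uIcc_subset_uIcc_right hc)), htail, add_zero]
  calc |∫ z in b..c, f z| ≤ M * |c - b| :=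
        (Real.norm_eq_abs _).symm.trans_le <|
          norm_integral_le_of_norm_le_const fun z _ => (Real.norm_eq_abs _).trans_le (hM z)
    _ ≤ M * r := mul_le_mul_of_nonneg_left hcb ((abs_nonneg _).trans (hM b))

theorem stmt2 :
    ∃ C > (0 : ℝ), ∀ (A : ℝ → ℝ) (η ε : ℝ), 0 < η → 0 < ε →
      Differentiable ℝ A → (∀ z, η ≤ deriv A z) →
      ∀ a b : ℝ, abs (psiEps A ε a b - |a - b|) ≤ C * ε / η := by
  refine ⟨2, two_pos, fun A η ε hη hε hA hA' a b => ?_⟩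
  have hmono : StrictMono A := strictMono_of_deriv_pos fun z => hη.trans_le (hA' z)
  have hvanish : ∀ z, ε / η ≤ |z - b| → signEps ε (A z - A b) - sgn (z - b) = 0 := by
    intro z hz
    have hε_le : ε ≤ |A z - A b| :=
      ((div_le_iff₀' hη).1 hz).trans (mul_abs_sub_le_abs_sub_of_le_deriv hA hA' z b)
    rw [signEps_of_le_abs hε hε_le, sgn_sub_eq_of_strictMono hmono, sub_self]
  have hbound : ∀ z, |signEps ε (A z - A b) - sgn (z - b)| ≤ 2 := fun z =>
    (abs_sub _ _).trans (by linarith [abs_signEps_le_one ε (A z - A b), abs_sgn_le_one (z - b)])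
  have hint_signEps : IntervalIntegrable (fun z => signEps ε (A z - A b)) volume b a :=
    intervalIntegrable_of_abs_le
      ((measurable_signEps ε).comp (hA.continuous.measurable.sub_const _))
      (fun z => abs_signEps_le_one ε _) b a
  have hint_sgn : IntervalIntegrable (fun z => sgn (z - b)) volume b a :=
    intervalIntegrable_of_abs_le (measurable_sgn.comp (measurable_id.sub_const b))
      (fun z => abs_sgn_le_one _) b a
  rw [psiEps, ← integral_sgn_sub a b, ← integral_sub hint_signEps hint_sgn]
  calc _ ≤ 2 * (ε / η) := abs_intervalIntegral_le_of_eq_zero (div_pos hε hη).le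
          (hint_signEps.sub hint_sgn) hbound hvanish
    _ = 2 * ε / η := by ring
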